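/- arXiv:1203.5547 — 2 statements merged into one kernel-verified Lean document; each statement's English description precedes it below -/
import Mathlib

section
/- Let B₁, B₂ ∈ M₂(ℂ) be invertible density matrices and let t > 0 be a real number satisfying det B₁ = det(t·B₂). Then det(B₁ + t·B₂) − |det(B₁ − t·B₂)| = 4t·det(√B₁ · √B₂). -/
open Matrix
open scoped ComplexOrder

/-- The positive semidefinite square root, as defined in Mathlib (Dec 2024). -/
noncomputable def Matrix.PosSemidef.sqrt {n 𝕜 : Type*} [Fintype n] [DecidableEq n] [RCLike 𝕜]
    {A : Matrix n n 𝕜} (hA : A.PosSemidef) : Matrix n n 𝕜 :=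
  hA.1.eigenvectorUnitary.1 * diagonal ((↑) ∘ (√·) ∘ hA.1.eigenvalues) *
  (star hA.1.eigenvectorUnitary : Matrix n n 𝕜)

/-!
For `2 × 2` matrices `det (X + Y) + det (X - Y) = 2 det X + 2 det Y`. On `2 × 2` Hermitian
matrices `det` is a Lorentzian quadratic form whose future cone is the positive semidefinite
matrices, so the reverse Cauchy–Schwarz inequality gives `det (B₁ - t B₂) ≤ 0` when `B₁` and
`t B₂` have the same determinant `k`. The left-hand side is therefore `2k + 2k`, and the
right-hand side is `4t · √k · √(k / t²) = 4k`.
-/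

open scoped MatrixOrder

theorem Matrix.PosSemidef.sqrt_eq_cfcSqrt {n 𝕜 : Type*} [Fintype n] [DecidableEq n] [RCLike 𝕜]
    {A : Matrix n n 𝕜} (hA : A.PosSemidef) : hA.sqrt = CFC.sqrt A := by
  rw [CFC.sqrt_eq_real_sqrt A hA.nonneg, cfcₙ_eq_cfc, hA.1.cfc_eq]
  rfl

theorem Matrix.det_add_add_det_sub_fin_two {R : Type*} [CommRing R]
    (A B : Matrix (Fin 2) (Fin 2) R) : (A + B).det + (A - B).det = 2 * A.det + 2 * B.det := by
  simp only [det_fin_two, add_apply, sub_apply]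
  ring

theorem Matrix.IsHermitian.det_fin_two_eq_ofReal {M : Matrix (Fin 2) (Fin 2) ℂ}
    (hM : M.IsHermitian) : M.det = ((M 0 0).re * (M 1 1).re - ‖M 0 1‖ ^ 2 : ℝ) := by
  have h00 : ((M 0 0).re : ℂ) = M 0 0 := Complex.conj_eq_iff_re.mp (hM.apply 0 0)
  have h11 : ((M 1 1).re : ℂ) = M 1 1 := Complex.conj_eq_iff_re.mp (hM.apply 1 1)
  rw [det_fin_two, ← hM.apply 1 0, Complex.star_def, Complex.mul_conj, Complex.normSq_eq_norm_sq]
  push_cast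
  rw [h00, h11]

/-- Reverse Cauchy–Schwarz for the Lorentzian form `det` on Hermitian `!![a, b; star b, d]`,
with `β = ‖b‖`, between two such matrices of the same determinant `k`. -/
theorem two_mul_add_mul_le_add_mul {a d a' d' β β' k : ℝ} (ha : 0 ≤ a) (hd : 0 ≤ d)
    (ha' : 0 ≤ a') (hd' : 0 ≤ d') (hβ : 0 ≤ β) (hβ' : 0 ≤ β') (hk : 0 ≤ k)
    (h : a * d = β ^ 2 + k) (h' : a' * d' = β' ^ 2 + k) :
    2 * (k + β * β') ≤ a * d' + a' * d := by
  have hsq : (2 * (k + β * β')) ^ 2 ≤ (a * d' + a' * d) ^ 2 := by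
    nlinarith [sq_nonneg (a * d' - a' * d), mul_nonneg hk (sq_nonneg (β - β'))]
  exact (pow_le_pow_iff_left₀ (by positivity) (by positivity) two_ne_zero).1 hsq

theorem Matrix.PosSemidef.det_sub_nonpos_of_det_eq {A B : Matrix (Fin 2) (Fin 2) ℂ}
    (hA : A.PosSemidef) (hB : B.PosSemidef) (h : A.det = B.det) : (A - B).det ≤ 0 := by
  have hk := hA.det_nonneg
  rw [hA.1.det_fin_two_eq_ofReal, Complex.zero_le_real] at hk
  rw [hA.1.det_fin_two_eq_ofReal, hB.1.det_fin_two_eq_ofReal, Complex.ofReal_inj] at h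
  rw [(hA.1.sub hB.1).det_fin_two_eq_ofReal, ← Complex.ofReal_zero, Complex.real_le_real]
  simp only [sub_apply, Complex.sub_re, norm_sub_sq_real]
  have hcross := real_inner_le_norm (A 0 1) (B 0 1)
  have hmixed := two_mul_add_mul_le_add_mul (Complex.nonneg_iff.mp (hA.diag_nonneg (i := 0))).1
    (Complex.nonneg_iff.mp (hA.diag_nonneg (i := 1))).1
    (Complex.nonneg_iff.mp (hB.diag_nonneg (i := 0))).1
    (Complex.nonneg_iff.mp (hB.diag_nonneg (i := 1))).1 (norm_nonneg (A 0 1)) (norm_nonneg (B 0 1))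
    hk (by ring) (by linarith)
  linarith

theorem stmt_5_general (B₁ B₂ : Matrix (Fin 2) (Fin 2) ℂ)
    (hB₁ : B₁.PosSemidef)
    (hB₂ : B₂.PosSemidef)
    (t : ℝ) (ht : 0 < t) (hdet : B₁.det = ((t : ℂ) • B₂).det) :
    (B₁ + (t : ℂ) • B₂).det - (‖(B₁ - (t : ℂ) • B₂).det‖ : ℂ) =
      (4 * t : ℂ) * (hB₁.sqrt * hB₂.sqrt).det := by
  have hdiff : (B₁ - (t : ℂ) • B₂).det ≤ 0 :=
    hB₁.det_sub_nonpos_of_det_eq (hB₂.smul (by exact_mod_cast ht.le)) hdet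
  have hnorm : (‖(B₁ - (t : ℂ) • B₂).det‖ : ℂ) = -(B₁ - (t : ℂ) • B₂).det := by
    rw [← norm_neg, ← Complex.eq_coe_norm_of_nonneg (neg_nonneg.mpr hdiff)]
  obtain ⟨r, hr, hB₂det⟩ := RCLike.nonneg_iff_exists_ofReal.mp hB₂.det_nonneg
  have hB₁det : B₁.det = ((t ^ 2 * r : ℝ) : ℂ) := by
    rw [hdet, det_smul, ← hB₂det]
    simp
  rw [hnorm, sub_neg_eq_add, det_add_add_det_sub_fin_two, ← hdet, det_mul, hB₁.sqrt_eq_cfcSqrt,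
    hB₂.sqrt_eq_cfcSqrt, hB₁.det_sqrt, hB₂.det_sqrt, RCLike.sqrt_of_nonneg hB₁.det_nonneg,
    RCLike.sqrt_of_nonneg hB₂.det_nonneg, hB₁det, ← hB₂det]
  have hsqrt : ((√r : ℝ) : ℂ) ^ 2 = r := by exact_mod_cast Real.sq_sqrt hr
  rw [RCLike.re_to_complex, Complex.ofReal_re, Real.sqrt_mul' _ hr, Real.sqrt_sq ht.le]
  push_cast
  linear_combination (-4 * (t : ℂ) ^ 2) * hsqrt

/-- For invertible qubit density matrices `B₁, B₂` and `t > 0` with `det B₁ = det (t B₂)`,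
`det(B₁ + t B₂) - |det(B₁ - t B₂)| = 4 t det(√B₁ √B₂)`. -/
theorem stmt_5 (B₁ B₂ : Matrix (Fin 2) (Fin 2) ℂ)
    (hB₁ : B₁.PosSemidef) (hB₁t : B₁.trace = 1) (hB₁inv : IsUnit B₁.det)
    (hB₂ : B₂.PosSemidef) (hB₂t : B₂.trace = 1) (hB₂inv : IsUnit B₂.det)
    (t : ℝ) (ht : 0 < t) (hdet : B₁.det = ((t : ℂ) • B₂).det) :
    (B₁ + (t : ℂ) • B₂).det - (‖(B₁ - (t : ℂ) • B₂).det‖ : ℂ) =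
      (4 * t : ℂ) * (hB₁.sqrt * hB₂.sqrt).det :=
  stmt_5_general B₁ B₂ hB₁ hB₂ t ht hdet
end

section
/- Let x₁,…,x_k ∈ ℂⁿ be unit vectors and B₁,…,B_k ∈ M_m(ℂ) be density matrices. If there exists a trace-preserving completely positive map T : M_n(ℂ) → M_m(ℂ) with T(x_ix_iᴴ) = B_i for i = 1,…,k, then |x_iᴴx_j| ≤ ‖√B_i · √B_j‖₁ for all i, j = 1,…,k. -/
/-!
Write `Uᵢ` for the matrix whose columns are the vectors `F_r xᵢ`. Then `Uᵢ Uᵢᴴ = Bᵢ`, and since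
`∑ F_rᴴ F_r = 1` we get `tr (Uᵢᴴ Uⱼ) = xᵢᴴ xⱼ`. The trace is bounded by the sum of the singular
values, and those of `Uᵢᴴ Uⱼ` agree with those of `√Bᵢ √Bⱼ`: the Gram matrix of `Aᴴ D` only
depends on `A Aᴴ`, so `Uᵢ` may be replaced by `√Bᵢ`, and after passing to the adjoint, `Uⱼ` by `√Bⱼ`.
-/

open Matrix Polynomial
open scoped ComplexOrder

/-- The trace norm of a complex matrix: `tr √(XᴴX)`, the sum of singular values. -/
noncomputable def traceNorm {p q : ℕ} (X : Matrix (Fin p) (Fin q) ℂ) : ℝ :=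
  ((Matrix.posSemidef_conjTranspose_mul_self X).sqrt.trace).re

namespace Matrix

section Sqrt

variable {n : Type*} [Fintype n] [DecidableEq n] {A : Matrix n n ℂ}

lemma PosSemidef.sqrt_eq_cfc (hA : A.PosSemidef) : hA.sqrt = cfc Real.sqrt A := by
  rw [hA.1.cfc_eq, IsHermitian.cfc, Unitary.conjStarAlgAut_apply]
  rfl

lemma PosSemidef.sqrt_conjTranspose (hA : A.PosSemidef) : hA.sqrtᴴ = hA.sqrt := by
  rw [hA.sqrt_eq_cfc]
  exact (cfc_predicate Real.sqrt A : IsSelfAdjoint _)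

lemma PosSemidef.sqrt_mul_self (hA : A.PosSemidef) : hA.sqrt * hA.sqrt = A := by
  rw [hA.sqrt_eq_cfc, ← cfc_mul Real.sqrt Real.sqrt A]
  conv_rhs => rw [← cfc_id ℝ A hA.1]
  refine cfc_congr fun x hx => Real.mul_self_sqrt ?_
  obtain ⟨i, rfl⟩ := hA.1.spectrum_real_eq_range_eigenvalues ▸ hx
  exact hA.eigenvalues_nonneg i

lemma PosSemidef.trace_sqrt (hA : A.PosSemidef) :
    hA.sqrt.trace = ∑ i, (√(hA.1.eigenvalues i) : ℂ) := by
  rw [PosSemidef.sqrt, trace_mul_cycle, (mem_unitaryGroup_iff').mp hA.1.eigenvectorUnitary.2,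
    one_mul, trace_diagonal]
  rfl

end Sqrt

lemma IsHermitian.sum_eigenvalues_eq_of_charpoly {m n : Type*} [Fintype m] [Fintype n]
    [DecidableEq m] [DecidableEq n] {M : Matrix m m ℂ} {N : Matrix n n ℂ}
    (hM : M.IsHermitian) (hN : N.IsHermitian)
    (h : X ^ Fintype.card n * M.charpoly = X ^ Fintype.card m * N.charpoly)
    (f : ℝ → ℝ) (hf : f 0 = 0) :
    ∑ i, f (hM.eigenvalues i) = ∑ i, f (hN.eigenvalues i) := by
  have hroots := congrArg (fun p : ℂ[X] => (p.roots.map fun z => f z.re).sum) h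
  simp only [roots_mul (mul_ne_zero (pow_ne_zero _ X_ne_zero) (charpoly_monic _).ne_zero),
    roots_X_pow, hM.roots_charpoly_eq_eigenvalues, hN.roots_charpoly_eq_eigenvalues] at hroots
  simpa [hf, Multiset.nsmul_singleton] using hroots

lemma sq_norm_le_re_conjTranspose_mul_self_apply {m n : Type*} [Fintype m] (Y : Matrix m n ℂ)
    (a : m) (i : n) : ‖Y a i‖ ^ 2 ≤ ((Yᴴ * Y) i i).re := by
  have h : ((Yᴴ * Y) i i).re = ∑ b, ‖Y b i‖ ^ 2 := by
    simp [mul_apply, Complex.re_sum, ← Complex.normSq_eq_conj_mul_self, Complex.sq_norm]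
  rw [h]
  exact Finset.single_le_sum (f := fun b => ‖Y b i‖ ^ 2) (fun b _ => sq_nonneg _)
    (Finset.mem_univ a)

section SingularValues

variable {k l m n : Type*} [Fintype k] [Fintype l] [Fintype m] [Fintype n] [DecidableEq n]

noncomputable def sumSingularValues (X : Matrix m n ℂ) : ℝ :=
  ∑ j, √((posSemidef_conjTranspose_mul_self X).1.eigenvalues j)

lemma sumSingularValues_eq_of_conjTranspose_mul_self_eq {X : Matrix l n ℂ} {Y : Matrix m n ℂ}
    (h : Xᴴ * X = Yᴴ * Y) : X.sumSingularValues = Y.sumSingularValues := by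
  unfold sumSingularValues
  rw [IsHermitian.eigenvalues_eq_eigenvalues_iff _ _ |>.mpr (by rw [h])]

lemma sumSingularValues_conjTranspose_mul_eq {A : Matrix l m ℂ} {C : Matrix k l ℂ}
    (D : Matrix l n ℂ) (h : A * Aᴴ = Cᴴ * C) :
    (Aᴴ * D).sumSingularValues = (C * D).sumSingularValues := by
  refine sumSingularValues_eq_of_conjTranspose_mul_self_eq ?_
  simp only [conjTranspose_mul, conjTranspose_conjTranspose, Matrix.mul_assoc]
  rw [← Matrix.mul_assoc A, h, Matrix.mul_assoc]

lemma sumSingularValues_conjTranspose [DecidableEq m] (X : Matrix m n ℂ) :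
    Xᴴ.sumSingularValues = X.sumSingularValues :=
  IsHermitian.sum_eigenvalues_eq_of_charpoly _ _
    (by simpa using charpoly_mul_comm' X Xᴴ) _ Real.sqrt_zero

lemma norm_trace_le_sumSingularValues (X : Matrix n n ℂ) : ‖X.trace‖ ≤ X.sumSingularValues := by
  set hX := (posSemidef_conjTranspose_mul_self X).1
  set Y := Unitary.conjStarAlgAut ℂ _ (star hX.eigenvectorUnitary) X
  have hY : Yᴴ * Y = diagonal (RCLike.ofReal ∘ hX.eigenvalues) := by
    rw [← hX.conjStarAlgAut_star_eigenvectorUnitary, ← star_eq_conjTranspose, ← map_star,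
      ← map_mul, star_eq_conjTranspose]
  have htr : Y.trace = X.trace := by
    simp [Y, trace_mul_cycle, (mem_unitaryGroup_iff).mp hX.eigenvectorUnitary.2]
  calc ‖X.trace‖ = ‖∑ i, Y i i‖ := by rw [← htr]; rfl
    _ ≤ ∑ i, ‖Y i i‖ := norm_sum_le _ _
    _ ≤ X.sumSingularValues := Finset.sum_le_sum fun i _ => Real.le_sqrt_of_sq_le <|
        (sq_norm_le_re_conjTranspose_mul_self_apply Y i i).trans_eq (by simp [hY])

end SingularValues

section Kraus

variable {σ m n : Type*} [Fintype σ] [Fintype n]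

def krausColumns (F : σ → Matrix m n ℂ) (v : n → ℂ) : Matrix m σ ℂ :=
  of fun a r => (F r *ᵥ v) a

lemma krausColumns_mul_conjTranspose (F : σ → Matrix m n ℂ) (v : n → ℂ) :
    krausColumns F v * (krausColumns F v)ᴴ = ∑ r, F r * vecMulVec v (star v) * (F r)ᴴ := by
  simp_rw [mul_vecMulVec, vecMulVec_mul, ← star_mulVec]
  ext a b
  simp [krausColumns, mul_apply, vecMulVec_apply, sum_apply]

lemma trace_conjTranspose_krausColumns_mul [Fintype m] (F : σ → Matrix m n ℂ) (v w : n → ℂ) :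
    ((krausColumns F v)ᴴ * krausColumns F w).trace
      = star v ⬝ᵥ ((∑ r, (F r)ᴴ * F r) *ᵥ w) := by
  have h : ∀ r, star (F r *ᵥ v) ⬝ᵥ (F r *ᵥ w) = star v ⬝ᵥ (((F r)ᴴ * F r) *ᵥ w) := fun r => by
    rw [star_mulVec, ← dotProduct_mulVec, mulVec_mulVec]
  simp_rw [sum_mulVec, dotProduct_sum, ← h]
  simp [trace, krausColumns, mul_apply, dotProduct]

end Kraus

end Matrix

lemma traceNorm_eq_sumSingularValues {p q : ℕ} (X : Matrix (Fin p) (Fin q) ℂ) :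
    traceNorm X = X.sumSingularValues := by
  simp [traceNorm, PosSemidef.trace_sqrt, Complex.re_sum, sumSingularValues]

theorem stmt_16_general {n m k : ℕ} (x : Fin k → Fin n → ℂ)
    (B : Fin k → Matrix (Fin m) (Fin m) ℂ)
    (hB : ∀ i, (B i).PosSemidef)
    (hT : ∃ (t : ℕ) (F : Fin t → Matrix (Fin m) (Fin n) ℂ),
        (∑ j, (F j)ᴴ * F j = 1) ∧
        ∀ i, (∑ j, F j * vecMulVec (x i) (star (x i)) * (F j)ᴴ) = B i) :
    ∀ i j, ‖star (x i) ⬝ᵥ x j‖ ≤ traceNorm ((hB i).sqrt * (hB j).sqrt) := by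
  obtain ⟨t, F, hF, hFB⟩ := hT
  intro i j
  have hgram : ∀ l, krausColumns F (x l) * (krausColumns F (x l))ᴴ = (hB l).sqrtᴴ * (hB l).sqrt :=
    fun l => by
      rw [krausColumns_mul_conjTranspose, hFB, (hB l).sqrt_conjTranspose, (hB l).sqrt_mul_self]
  calc ‖star (x i) ⬝ᵥ x j‖ = ‖((krausColumns F (x i))ᴴ * krausColumns F (x j)).trace‖ := by
        rw [trace_conjTranspose_krausColumns_mul, hF, one_mulVec]
    _ ≤ ((krausColumns F (x i))ᴴ * krausColumns F (x j)).sumSingularValues :=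
        norm_trace_le_sumSingularValues _
    _ = ((hB i).sqrt * krausColumns F (x j)).sumSingularValues :=
        sumSingularValues_conjTranspose_mul_eq _ (hgram i)
    _ = ((krausColumns F (x j))ᴴ * (hB i).sqrt).sumSingularValues := by
        rw [← sumSingularValues_conjTranspose, conjTranspose_mul, (hB i).sqrt_conjTranspose]
    _ = ((hB j).sqrt * (hB i).sqrt).sumSingularValues :=
        sumSingularValues_conjTranspose_mul_eq _ (hgram j)
    _ = traceNorm ((hB i).sqrt * (hB j).sqrt) := by
        rw [traceNorm_eq_sumSingularValues, ← sumSingularValues_conjTranspose, conjTranspose_mul,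
          (hB i).sqrt_conjTranspose, (hB j).sqrt_conjTranspose]

/-- If a TPCP map sends the pure states `xᵢxᵢᴴ` to the density matrices `Bᵢ`, then the
fidelities satisfy `|xᵢᴴxⱼ| ≤ ‖√Bᵢ √Bⱼ‖₁` for all `i, j`. -/
theorem stmt_16 {n m k : ℕ} (x : Fin k → Fin n → ℂ)
    (hx : ∀ i, star (x i) ⬝ᵥ x i = 1)
    (B : Fin k → Matrix (Fin m) (Fin m) ℂ)
    (hB : ∀ i, (B i).PosSemidef) (hBt : ∀ i, (B i).trace = 1)
    (hT : ∃ (t : ℕ) (F : Fin t → Matrix (Fin m) (Fin n) ℂ),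
        (∑ j, (F j)ᴴ * F j = 1) ∧
        ∀ i, (∑ j, F j * vecMulVec (x i) (star (x i)) * (F j)ᴴ) = B i) :
    ∀ i j, ‖star (x i) ⬝ᵥ x j‖ ≤ traceNorm ((hB i).sqrt * (hB j).sqrt) :=
  stmt_16_general x B hB hT
end
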